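/- Let f : [0,1] → ℝ be continuous with f(1) − f(0) = d an integer with |d| ≥ 2. Then for every c ∈ ℝ, the set {t ∈ [0,1] : f(t) − c ∈ ℤ} has at least |d| elements. Consequently, the circle map φ(e^{2πit}) = e^{2πif(t)} of degree d satisfies #φ^{-1}(w) ≥ |d| for every w in the circle. -/

import Mathlib

/-!
If `f b - f a = d`, the values of `f` on `[a, b)` cover a half-open interval of length `|d|`,
which contains exactly `|d|` points of each coset `c + ℤ`; by the intermediate value theorem
each of them is a value of `f`, and distinct values have distinct preimages. Since
`t ↦ e^{2πit}` is injective on `[0, 1)` and `1`-periodic, these preimages give `|d|` distinct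
points of each fiber of the circle map.
-/

open Set Complex Real

lemma exists_finset_subset_Ico_sub_eq_int (a c : ℝ) (n : ℕ) :
    ∃ V : Finset ℝ, V.card = n ∧ ∀ v ∈ V, v ∈ Ico a (a + n) ∧ ∃ m : ℤ, v - c = m := by
  refine ⟨(Finset.range n).image fun j : ℕ => c + ⌈a - c⌉ + j, ?_, ?_⟩
  · rw [Finset.card_image_of_injective _ fun i j h => by simpa using h, Finset.card_range]
  · simp only [Finset.mem_image, Finset.mem_range]
    rintro _ ⟨j, hj, rfl⟩
    have hceil := Int.le_ceil (a - c)
    have hceil' := Int.ceil_lt_add_one (a - c)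
    have hj' : (j : ℝ) + 1 ≤ n := by exact_mod_cast hj
    refine ⟨⟨by linarith [j.cast_nonneg (α := ℝ)], by linarith⟩, ⌈a - c⌉ + j, by push_cast; ring⟩

lemma exists_finset_Ico_sub_eq_int_of_eq_add_nat {f : ℝ → ℝ} {a b : ℝ} (hab : a ≤ b)
    (hf : ContinuousOn f (Icc a b)) (n : ℕ) (hn : f b = f a + n) (c : ℝ) :
    ∃ S : Finset ℝ, n ≤ S.card ∧ ∀ t ∈ S, t ∈ Ico a b ∧ ∃ m : ℤ, f t - c = m := by
  classical
  obtain ⟨V, hVcard, hV⟩ := exists_finset_subset_Ico_sub_eq_int (f a) c n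
  have hV_image : (V : Set ℝ) ⊆ f '' Ico a b := fun v hv =>
    intermediate_value_Ico hab hf (hn ▸ (hV v hv).1)
  obtain ⟨S, hS, rfl⟩ := Finset.subset_set_image_iff.mp hV_image
  exact ⟨S, hVcard ▸ Finset.card_image_le,
    fun t ht => ⟨hS ht, (hV (f t) (Finset.mem_image_of_mem f ht)).2⟩⟩

lemma exists_finset_Ico_sub_eq_int_of_sub_eq_int {f : ℝ → ℝ} {a b : ℝ} (hab : a ≤ b)
    (hf : ContinuousOn f (Icc a b)) (d : ℤ) (hd : f b - f a = d) (c : ℝ) :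
    ∃ S : Finset ℝ, d.natAbs ≤ S.card ∧ ∀ t ∈ S, t ∈ Ico a b ∧ ∃ m : ℤ, f t - c = m := by
  obtain ⟨n, rfl | rfl⟩ := Int.eq_nat_or_neg d
  · rw [Int.natAbs_natCast]
    exact exists_finset_Ico_sub_eq_int_of_eq_add_nat hab hf n (by push_cast at hd; linarith) c
  · -- `-f` has degree `|d|`, and `f t - c ∈ ℤ` iff `-f t - (-c) ∈ ℤ`.
    rw [Int.natAbs_neg, Int.natAbs_natCast]
    obtain ⟨S, hcard, hS⟩ := exists_finset_Ico_sub_eq_int_of_eq_add_nat hab hf.neg n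
      (by simp only [Pi.neg_apply]; push_cast at hd; linarith) (-c)
    refine ⟨S, hcard, fun t ht => ⟨(hS t ht).1, ?_⟩⟩
    obtain ⟨m, hm⟩ := (hS t ht).2
    exact ⟨-m, by push_cast; simp only [Pi.neg_apply] at hm; linarith⟩

lemma exp_two_pi_mul_I_mul_add_int (x : ℝ) (m : ℤ) :
    cexp (2 * π * I * ↑(x + m)) = cexp (2 * π * I * x) := by
  rw [ofReal_add, mul_add, Complex.exp_add, ofReal_intCast, mul_comm _ (m : ℂ),
    exp_int_mul_two_pi_mul_I, mul_one]

lemma injOn_exp_two_pi_mul_I_mul_Ico :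
    InjOn (fun t : ℝ => cexp (2 * π * I * t)) (Ico 0 1) := by
  intro s hs t ht hst
  obtain ⟨m, hm⟩ := exp_eq_exp_iff_exists_int.mp hst
  have hsm : s = t + m := by
    have h2πI : 2 * (π : ℂ) * I ≠ 0 := by simp [pi_ne_zero, I_ne_zero]
    have : (s : ℂ) = t + m := mul_left_cancel₀ h2πI (by linear_combination hm)
    exact_mod_cast this
  have hm0 : m = 0 := by
    have h1 : (-1 : ℝ) < m := by linarith [hs.1, ht.2]
    have h2 : (m : ℝ) < 1 := by linarith [hs.2, ht.1]
    have : -1 < m ∧ m < 1 := ⟨by exact_mod_cast h1, by exact_mod_cast h2⟩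
    omega
  simp [hsm, hm0]

lemma exists_exp_two_pi_mul_I_mul_eq {w : ℂ} (hw : ‖w‖ = 1) :
    ∃ c : ℝ, cexp (2 * π * I * c) = w := by
  refine ⟨arg w / (2 * π), ?_⟩
  conv_rhs => rw [← norm_mul_exp_arg_mul_I w, hw]
  rw [ofReal_one, one_mul]
  congr 1
  push_cast
  field_simp [pi_ne_zero]

open Complex in
theorem lift_degree_fiber_count_general (f : ℝ → ℝ) (hf : ContinuousOn f (Set.Icc 0 1))
    (d : ℤ) (hd : f 1 - f 0 = d) :
    (∀ c : ℝ, ∃ S : Finset ℝ, d.natAbs ≤ S.card ∧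
      ∀ t ∈ S, t ∈ Set.Icc (0 : ℝ) 1 ∧ ∃ n : ℤ, f t - c = n) ∧
    (∀ w : ℂ, ‖w‖ = 1 → ∃ S : Finset ℂ, d.natAbs ≤ S.card ∧
      ∀ z ∈ S, ∃ t ∈ Set.Ico (0 : ℝ) 1,
        z = Complex.exp (2 * Real.pi * Complex.I * t) ∧
        Complex.exp (2 * Real.pi * Complex.I * (f t)) = w) := by
  classical
  have fiber := exists_finset_Ico_sub_eq_int_of_sub_eq_int zero_le_one hf d hd
  refine ⟨fun c => ?_, fun w hw => ?_⟩
  · obtain ⟨S, hcard, hS⟩ := fiber c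
    exact ⟨S, hcard, fun t ht => ⟨Ico_subset_Icc_self (hS t ht).1, (hS t ht).2⟩⟩
  · obtain ⟨c, rfl⟩ := exists_exp_two_pi_mul_I_mul_eq hw
    obtain ⟨S, hcard, hS⟩ := fiber c
    refine ⟨S.image fun t : ℝ => cexp (2 * π * I * t), ?_, ?_⟩
    · rwa [Finset.card_image_of_injOn (injOn_exp_two_pi_mul_I_mul_Ico.mono fun t ht =>
        (hS t ht).1)]
    · simp only [Finset.mem_image]
      rintro _ ⟨t, ht, rfl⟩
      obtain ⟨htIco, m, hm⟩ := hS t ht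
      refine ⟨t, htIco, rfl, ?_⟩
      rw [show f t = c + m by linarith, exp_two_pi_mul_I_mul_add_int]

open Complex in
/-- A lift `f` of a degree-`d` circle map with `|d| ≥ 2` takes each value mod ℤ
at least `|d|` times on `[0,1]`; consequently every fiber of the circle map
`e^{2πit} ↦ e^{2πif(t)}` has at least `|d|` points. -/
theorem lift_degree_fiber_count (f : ℝ → ℝ) (hf : ContinuousOn f (Set.Icc 0 1))
    (d : ℤ) (hd : f 1 - f 0 = d) (hd2 : 2 ≤ |d|) :
    (∀ c : ℝ, ∃ S : Finset ℝ, d.natAbs ≤ S.card ∧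
      ∀ t ∈ S, t ∈ Set.Icc (0 : ℝ) 1 ∧ ∃ n : ℤ, f t - c = n) ∧
    (∀ w : ℂ, ‖w‖ = 1 → ∃ S : Finset ℂ, d.natAbs ≤ S.card ∧
      ∀ z ∈ S, ∃ t ∈ Set.Ico (0 : ℝ) 1,
        z = Complex.exp (2 * Real.pi * Complex.I * t) ∧
        Complex.exp (2 * Real.pi * Complex.I * (f t)) = w) :=
  lift_degree_fiber_count_general f hf d hd
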